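/- Let B be a connected building set on S and let I_1, I_2 ∈ B with I_1 ∩ I_2 ≠ ∅, I_1 ⊄ I_2, I_2 ⊄ I_1 and |I_1 △ I_2| ≥ 3. Suppose i_1 ∈ I_1 \ I_2, i_2 ∈ I_2 \ I_1, N is a maximal nested set of B|_{I_1 ∩ I_2}, and N′ is a maximal nested set of B|_{(I_1 △ I_2) \ {i_1, i_2}}, such that for some k ∈ {1, 2} the set {I_k} ∪ N ∪ (B|_{I_1 ∩ I_2})_max ∪ N′ ∪ (B|_{(I_1 △ I_2) \ {i_1, i_2}})_max is not a nested set of B. Then there exist I′_1, I′_2 ∈ B with I′_1 ⊇ I_1, I′_2 ⊇ I_2, i_1 ∈ I′_1 \ I′_2, i_2 ∈ I′_2 \ I′_1, I′_1 ∩ I′_2 ⊋ I_1 ∩ I_2 and I′_1 ∪ I′_2 = I_1 ∪ I_2. -/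

import Mathlib

/-- A building set on a nonempty finite set `S`: a finite set of nonempty subsets of `S`
closed under unions of intersecting members, and containing all singletons. -/
def IsBuilding (S : Finset ℕ) (B : Finset (Finset ℕ)) : Prop :=
  (∀ I ∈ B, I ⊆ S ∧ I.Nonempty) ∧
  (∀ I ∈ B, ∀ J ∈ B, (I ∩ J).Nonempty → I ∪ J ∈ B) ∧
  (∀ i ∈ S, ({i} : Finset ℕ) ∈ B)

/-- The set of maximal (by inclusion) elements of `B`. -/
def Bmax (B : Finset (Finset ℕ)) : Finset (Finset ℕ) :=
  B.filter (fun I => ∀ J ∈ B, I ⊆ J → I = J)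

/-- The restriction `B|_C = {I ∈ B : I ⊆ C}`. -/
def restrict (B : Finset (Finset ℕ)) (C : Finset ℕ) : Finset (Finset ℕ) :=
  B.filter (fun I => I ⊆ C)

/-- `N` is a nested set of `B`: a subset of `B \ Bmax B` whose members are pairwise
nested or disjoint, such that no union of `k ≥ 2` pairwise disjoint members lies in `B`. -/
def IsNested (B N : Finset (Finset ℕ)) : Prop :=
  N ⊆ B \ Bmax B ∧
  (∀ I ∈ N, ∀ J ∈ N, I ⊆ J ∨ J ⊆ I ∨ I ∩ J = ∅) ∧
  (∀ F ⊆ N, 2 ≤ F.card → (∀ I ∈ F, ∀ J ∈ F, I ≠ J → I ∩ J = ∅) → F.sup id ∉ B)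

/-- `N` is a maximal (by inclusion) nested set of `B`. -/
def MaxNested (B N : Finset (Finset ℕ)) : Prop :=
  IsNested B N ∧ ∀ N' : Finset (Finset ℕ), IsNested B N' → N ⊆ N' → N = N'

/-!
If `J ∈ B` lies in `I₁ ∪ I₂`, avoids `i₂`, meets `I₁` and is not contained in it, then
`I₁ ∪ J, I₂` is a valid pair (symmetrically `I₁, I₂ ∪ J` when `J` avoids `i₁` and crosses `I₂`).
Write `P = N ∪ (B|_{I₁ ∩ I₂})_max` and `Q = N′ ∪ (B|_{(I₁ △ I₂) \ {i₁, i₂}})_max`; for connected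
`B` both are nested sets of `B`. So `{I₁} ∪ P ∪ Q` can only fail to be nested through such a `J`:
a member of `Q` crossing `I₁`, or the union of a disjoint family that contains `I₁` or mixes
members of `P` and `Q`.
-/

open Finset

def HasSeparatedEnlargement (B : Finset (Finset ℕ)) (I₁ I₂ : Finset ℕ) (i₁ i₂ : ℕ) : Prop :=
  ∃ I'₁ ∈ B, ∃ I'₂ ∈ B, I₁ ⊆ I'₁ ∧ I₂ ⊆ I'₂ ∧ i₁ ∈ I'₁ \ I'₂ ∧ i₂ ∈ I'₂ \ I'₁ ∧
    I₁ ∩ I₂ ⊂ I'₁ ∩ I'₂ ∧ I'₁ ∪ I'₂ = I₁ ∪ I₂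

def IsLaminar (N : Finset (Finset ℕ)) : Prop :=
  ∀ I ∈ N, ∀ J ∈ N, I ⊆ J ∨ J ⊆ I ∨ I ∩ J = ∅

section Basic

variable {S C : Finset ℕ} {A B N : Finset (Finset ℕ)}

theorem mem_restrict {I : Finset ℕ} : I ∈ restrict B C ↔ I ∈ B ∧ I ⊆ C := mem_filter

theorem Bmax_subset : Bmax A ⊆ A := filter_subset _ _

theorem IsNested.subset (hN : IsNested B N) : N ⊆ B := hN.1.trans sdiff_subset

theorem IsBuilding.nonempty_of_mem (hB : IsBuilding S B) {I : Finset ℕ} (hI : I ∈ B) :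
    I.Nonempty :=
  (hB.1 I hI).2

theorem IsBuilding.union_mem_restrict (hB : IsBuilding S B) (C : Finset ℕ) :
    ∀ I ∈ restrict B C, ∀ J ∈ restrict B C, (I ∩ J).Nonempty → I ∪ J ∈ restrict B C := by
  intro I hI J hJ hIJ
  rw [mem_restrict] at hI hJ ⊢
  exact ⟨hB.2.1 I hI.1 J hJ.1 hIJ, union_subset hI.2 hJ.2⟩

theorem subset_of_mem_Bmax (hA : ∀ I ∈ A, ∀ J ∈ A, (I ∩ J).Nonempty → I ∪ J ∈ A)
    {J M : Finset ℕ} (hJ : J ∈ A) (hM : M ∈ Bmax A) (hJM : (J ∩ M).Nonempty) : J ⊆ M := by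
  obtain ⟨hMA, hMmax⟩ := mem_filter.mp hM
  rw [hMmax _ (hA J hJ M hMA hJM) subset_union_right]
  exact subset_union_left

theorem union_Bmax_subset_restrict (hN : IsNested (restrict B C) N) :
    N ∪ Bmax (restrict B C) ⊆ restrict B C :=
  union_subset hN.subset Bmax_subset

theorem subset_of_mem_union_Bmax_restrict (hN : IsNested (restrict B C) N) :
    ∀ J ∈ N ∪ Bmax (restrict B C), J ⊆ C :=
  fun _ hJ => (mem_restrict.mp (union_Bmax_subset_restrict hN hJ)).2

end Basic

namespace IsLaminar

variable {A N P Q : Finset (Finset ℕ)}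

theorem union (hP : IsLaminar P) (hQ : IsLaminar Q) (hPQ : ∀ I ∈ P, ∀ J ∈ Q, I ∩ J = ∅) :
    IsLaminar (P ∪ Q) := by
  intro I hI J hJ
  rcases mem_union.mp hI with hI | hI <;> rcases mem_union.mp hJ with hJ | hJ
  · exact hP I hI J hJ
  · exact Or.inr (Or.inr (hPQ I hI J hJ))
  · exact Or.inr (Or.inr (inter_comm I J ▸ hPQ J hJ I hI))
  · exact hQ I hI J hJ

theorem insert {K : Finset ℕ} (hN : IsLaminar N) (hK : ∀ J ∈ N, K ⊆ J ∨ J ⊆ K ∨ K ∩ J = ∅) :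
    IsLaminar (insert K N) := by
  intro I hI J hJ
  rcases mem_insert.mp hI with rfl | hIN
  · rcases mem_insert.mp hJ with rfl | hJN
    exacts [Or.inl subset_rfl, hK J hJN]
  · rcases mem_insert.mp hJ with rfl | hJN
    · rcases hK I hIN with h | h | h
      exacts [Or.inr (Or.inl h), Or.inl h, Or.inr (Or.inr (inter_comm I _ ▸ h))]
    · exact hN I hIN J hJN

theorem union_Bmax (hA : ∀ I ∈ A, ∀ J ∈ A, (I ∩ J).Nonempty → I ∪ J ∈ A)
    (hN : IsLaminar N) (hNA : N ⊆ A) : IsLaminar (N ∪ Bmax A) := by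
  intro I hI J hJ
  by_cases hIJ : (I ∩ J).Nonempty
  swap
  · exact Or.inr (Or.inr (not_nonempty_iff_eq_empty.mp hIJ))
  rcases mem_union.mp hI with hI | hI
  · rcases mem_union.mp hJ with hJ | hJ
    · exact hN I hI J hJ
    · exact Or.inl (subset_of_mem_Bmax hA (hNA hI) hJ hIJ)
  · exact Or.inr (Or.inl (subset_of_mem_Bmax hA (union_subset hNA Bmax_subset hJ) hI
      (inter_comm I J ▸ hIJ)))

end IsLaminar

theorem isNested_union_Bmax_restrict {S C : Finset ℕ} {B N : Finset (Finset ℕ)}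
    (hB : IsBuilding S B) (hconn : Bmax B = {S}) (hSC : ¬S ⊆ C)
    (hN : IsNested (restrict B C) N) : IsNested B (N ∪ Bmax (restrict B C)) := by
  have hsub := union_Bmax_subset_restrict hN
  refine ⟨fun J hJ => ?_, IsLaminar.union_Bmax (hB.union_mem_restrict C) hN.2.1 hN.subset,
    fun F hF hcard hdisj hU => ?_⟩
  · obtain ⟨hJB, hJC⟩ := mem_restrict.mp (hsub hJ)
    refine mem_sdiff.mpr ⟨hJB, fun hJmax => hSC ?_⟩
    rw [hconn, mem_singleton] at hJmax
    exact hJmax ▸ hJC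
  have hUr : F.sup id ∈ restrict B C :=
    mem_restrict.mpr ⟨hU, Finset.sup_le fun J hJ => (mem_restrict.mp (hsub (hF hJ))).2⟩
  by_cases hFN : F ⊆ N
  · exact hN.2.2 F hFN hcard hdisj hUr
  obtain ⟨M, hMF, hMN⟩ := not_subset.mp hFN
  have hMmax : M ∈ Bmax (restrict B C) := (mem_union.mp (hF hMF)).resolve_left hMN
  -- a maximal member of the family is already its whole union, leaving no room for the others
  have hMU : M = F.sup id := (mem_filter.mp hMmax).2 _ hUr (le_sup (f := id) hMF)
  obtain ⟨K, hKF, hKM⟩ := exists_mem_ne hcard M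
  obtain ⟨x, hx⟩ := hB.nonempty_of_mem (mem_restrict.mp (hsub (hF hKF))).1
  have hxKM : x ∈ K ∩ M := mem_inter.mpr ⟨hx, hMU ▸ le_sup (f := id) hKF hx⟩
  rw [hdisj K hKF M hMF hKM] at hxKM
  exact notMem_empty x hxKM

namespace HasSeparatedEnlargement

variable {S : Finset ℕ} {B : Finset (Finset ℕ)} {I₁ I₂ J : Finset ℕ} {i₁ i₂ : ℕ}

theorem symm (h : HasSeparatedEnlargement B I₁ I₂ i₁ i₂) :
    HasSeparatedEnlargement B I₂ I₁ i₂ i₁ := by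
  obtain ⟨I'₁, hI'₁, I'₂, hI'₂, h₁, h₂, hi₁, hi₂, hinter, hunion⟩ := h
  refine ⟨I'₂, hI'₂, I'₁, hI'₁, h₂, h₁, hi₂, hi₁, ?_, ?_⟩
  · rwa [inter_comm I₂, inter_comm I'₂]
  · rwa [union_comm I₂, union_comm I'₂]

theorem of_inter_left (hB : IsBuilding S B) (hI₁ : I₁ ∈ B) (hI₂ : I₂ ∈ B) (hJ : J ∈ B)
    (hmeet : (I₁ ∩ J).Nonempty) (hJsub : J ⊆ I₁ ∪ I₂) (hJI₁ : ¬J ⊆ I₁)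
    (hi₁ : i₁ ∈ I₁ \ I₂) (hi₂ : i₂ ∈ I₂ \ I₁) (hi₂J : i₂ ∉ J) :
    HasSeparatedEnlargement B I₁ I₂ i₁ i₂ := by
  obtain ⟨x, hxJ, hxI₁⟩ := not_subset.mp hJI₁
  have hxI₂ : x ∈ I₂ := (mem_union.mp (hJsub hxJ)).resolve_left hxI₁
  refine ⟨I₁ ∪ J, hB.2.1 I₁ hI₁ J hJ hmeet, I₂, hI₂, subset_union_left, subset_rfl,
    ?_, ?_, ?_, ?_⟩
  · exact mem_sdiff.mpr ⟨mem_union_left _ (mem_sdiff.mp hi₁).1, (mem_sdiff.mp hi₁).2⟩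
  · simp only [mem_sdiff, mem_union] at hi₂ ⊢
    tauto
  · rw [ssubset_iff_of_subset (inter_subset_inter_right subset_union_left)]
    exact ⟨x, mem_inter.mpr ⟨mem_union_right _ hxJ, hxI₂⟩, fun h => hxI₁ (mem_inter.mp h).1⟩
  · rw [union_right_comm, union_eq_left.mpr hJsub]

theorem of_inter_right (hB : IsBuilding S B) (hI₁ : I₁ ∈ B) (hI₂ : I₂ ∈ B) (hJ : J ∈ B)
    (hmeet : (I₂ ∩ J).Nonempty) (hJsub : J ⊆ I₁ ∪ I₂) (hJI₂ : ¬J ⊆ I₂)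
    (hi₁ : i₁ ∈ I₁ \ I₂) (hi₂ : i₂ ∈ I₂ \ I₁) (hi₁J : i₁ ∉ J) :
    HasSeparatedEnlargement B I₁ I₂ i₁ i₂ :=
  (of_inter_left hB hI₂ hI₁ hJ hmeet (union_comm I₁ I₂ ▸ hJsub) hJI₂ hi₂ hi₁ hi₁J).symm

end HasSeparatedEnlargement

section Candidate

variable {S : Finset ℕ} {B P Q : Finset (Finset ℕ)} {I₁ I₂ : Finset ℕ} {i₁ i₂ : ℕ}

theorem subset_sdiff_of_mem_union (hi₁ : i₁ ∈ I₁ \ I₂) (hi₂ : i₂ ∈ I₂ \ I₁)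
    (hPC : ∀ J ∈ P, J ⊆ I₁ ∩ I₂)
    (hQD : ∀ K ∈ Q, K ⊆ ((I₁ ∪ I₂) \ (I₁ ∩ I₂)) \ {i₁, i₂}) :
    ∀ J ∈ P ∪ Q, J ⊆ (I₁ ∪ I₂) \ {i₁, i₂} := by
  intro J hJ x hx
  rcases mem_union.mp hJ with hJ | hJ
  · have := hPC J hJ hx
    simp only [mem_sdiff, mem_inter, mem_union, mem_insert, mem_singleton] at this hi₁ hi₂ ⊢
    grind
  · exact sdiff_subset_sdiff sdiff_subset subset_rfl (hQD J hJ hx)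

theorem HasSeparatedEnlargement.of_family_mem (hB : IsBuilding S B) (hI₁ : I₁ ∈ B)
    (hI₂ : I₂ ∈ B) (hi₁ : i₁ ∈ I₁ \ I₂) (hi₂ : i₂ ∈ I₂ \ I₁) (hPQ : P ∪ Q ⊆ B)
    (hPQsub : ∀ J ∈ P ∪ Q, J ⊆ (I₁ ∪ I₂) \ {i₁, i₂})
    {F : Finset (Finset ℕ)} (hF : F ⊆ insert I₁ (P ∪ Q)) (hI₁F : I₁ ∈ F) (hcard : 2 ≤ F.card)
    (hdisj : ∀ I ∈ F, ∀ J ∈ F, I ≠ J → I ∩ J = ∅) (hU : F.sup id ∈ B) :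
    HasSeparatedEnlargement B I₁ I₂ i₁ i₂ := by
  have hUsub : F.sup id ⊆ (I₁ ∪ I₂).erase i₂ := by
    refine Finset.sup_le fun J hJ => ?_
    rcases mem_insert.mp (hF hJ) with rfl | hJ
    · exact subset_erase.mpr ⟨subset_union_left, (mem_sdiff.mp hi₂).2⟩
    · intro x hx
      have := hPQsub J hJ hx
      simp only [mem_sdiff, mem_erase, mem_insert, mem_singleton] at this ⊢
      tauto
  have hI₁U : I₁ ⊆ F.sup id := le_sup (f := id) hI₁F
  obtain ⟨K, hKF, hKI₁⟩ := exists_mem_ne hcard I₁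
  have hKB : K ∈ B := (mem_insert.mp (hF hKF)).elim (fun h => (hKI₁ h).elim) (fun h => hPQ h)
  obtain ⟨x, hxK⟩ := hB.nonempty_of_mem hKB
  have hxI₁ : x ∉ I₁ := fun hx => by
    simpa [hdisj K hKF I₁ hI₁F hKI₁] using mem_inter.mpr ⟨hxK, hx⟩
  refine HasSeparatedEnlargement.of_inter_left hB hI₁ hI₂ hU ?_
    (hUsub.trans (erase_subset _ _)) (fun h => hxI₁ (h (le_sup (f := id) hKF hxK))) hi₁ hi₂
    (fun h => (mem_erase.mp (hUsub h)).1 rfl)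
  rw [inter_eq_left.mpr hI₁U]
  exact hB.nonempty_of_mem hI₁

theorem HasSeparatedEnlargement.of_family (hB : IsBuilding S B) (hI₁ : I₁ ∈ B)
    (hI₂ : I₂ ∈ B) (hi₁ : i₁ ∈ I₁ \ I₂) (hi₂ : i₂ ∈ I₂ \ I₁)
    (hP : IsNested B P) (hPC : ∀ J ∈ P, J ⊆ I₁ ∩ I₂)
    (hQ : IsNested B Q) (hQD : ∀ K ∈ Q, K ⊆ ((I₁ ∪ I₂) \ (I₁ ∩ I₂)) \ {i₁, i₂})
    {F : Finset (Finset ℕ)} (hF : F ⊆ P ∪ Q) (hcard : 2 ≤ F.card)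
    (hdisj : ∀ I ∈ F, ∀ J ∈ F, I ≠ J → I ∩ J = ∅) (hU : F.sup id ∈ B) :
    HasSeparatedEnlargement B I₁ I₂ i₁ i₂ := by
  by_cases hFP : F ⊆ P
  · exact absurd hU (hP.2.2 F hFP hcard hdisj)
  by_cases hFQ : F ⊆ Q
  · exact absurd hU (hQ.2.2 F hFQ hcard hdisj)
  obtain ⟨K, hKF, hKP⟩ := not_subset.mp hFP
  obtain ⟨J, hJF, hJQ⟩ := not_subset.mp hFQ
  have hK : K ∈ Q := (mem_union.mp (hF hKF)).resolve_left hKP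
  have hJ : J ∈ P := (mem_union.mp (hF hJF)).resolve_right hJQ
  obtain ⟨x, hxJ⟩ := hB.nonempty_of_mem (hP.subset hJ)
  obtain ⟨y, hyK⟩ := hB.nonempty_of_mem (hQ.subset hK)
  have hxU : x ∈ F.sup id := le_sup (f := id) hJF hxJ
  have hyU : y ∈ F.sup id := le_sup (f := id) hKF hyK
  have hxI : x ∈ I₁ ∩ I₂ := hPC J hJ hxJ
  have hUsub : F.sup id ⊆ (I₁ ∪ I₂) \ {i₁, i₂} :=
    Finset.sup_le fun L hL => subset_sdiff_of_mem_union hi₁ hi₂ hPC hQD L (hF hL)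
  have hi₁U : i₁ ∉ F.sup id := fun h => (mem_sdiff.mp (hUsub h)).2 (by simp)
  have hi₂U : i₂ ∉ F.sup id := fun h => (mem_sdiff.mp (hUsub h)).2 (by simp)
  -- the union meets `I₁ ∩ I₂` through `J`, and leaves `I₁` or `I₂` through `y ∈ I₁ △ I₂`
  have hy : y ∉ I₁ ∨ y ∉ I₂ := by
    have := hQD K hK hyK
    simp only [mem_sdiff, mem_inter] at this
    tauto
  rcases hy with hy | hy
  · exact .of_inter_left hB hI₁ hI₂ hU ⟨x, mem_inter.mpr ⟨(mem_inter.mp hxI).1, hxU⟩⟩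
      (hUsub.trans sdiff_subset) (fun h => hy (h hyU)) hi₁ hi₂ hi₂U
  · exact .of_inter_right hB hI₁ hI₂ hU ⟨x, mem_inter.mpr ⟨(mem_inter.mp hxI).2, hxU⟩⟩
      (hUsub.trans sdiff_subset) (fun h => hy (h hyU)) hi₁ hi₂ hi₁U

theorem HasSeparatedEnlargement.of_not_isNested_insert (hB : IsBuilding S B)
    (hconn : Bmax B = {S}) (hI₁ : I₁ ∈ B) (hI₂ : I₂ ∈ B) (h21 : ¬I₂ ⊆ I₁)
    (hi₁ : i₁ ∈ I₁ \ I₂) (hi₂ : i₂ ∈ I₂ \ I₁)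
    (hP : IsNested B P) (hPC : ∀ J ∈ P, J ⊆ I₁ ∩ I₂)
    (hQ : IsNested B Q) (hQD : ∀ K ∈ Q, K ⊆ ((I₁ ∪ I₂) \ (I₁ ∩ I₂)) \ {i₁, i₂})
    (hnot : ¬IsNested B (insert I₁ (P ∪ Q))) : HasSeparatedEnlargement B I₁ I₂ i₁ i₂ := by
  by_contra hne
  have hPQ : P ∪ Q ⊆ B \ Bmax B := union_subset hP.1 hQ.1
  refine hnot ⟨insert_subset_iff.mpr ⟨?_, hPQ⟩, ?_, fun F hF hcard hdisj hU => ?_⟩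
  · refine mem_sdiff.mpr ⟨hI₁, fun hmax => h21 ?_⟩
    rw [hconn, mem_singleton] at hmax
    exact hmax ▸ (hB.1 I₂ hI₂).1
  · refine (IsLaminar.union hP.2.1 hQ.2.1 fun J hJ K hK => ?_).insert fun J hJ => ?_
    · exact disjoint_iff_inter_eq_empty.mp
        (disjoint_sdiff.mono (hPC J hJ) ((hQD K hK).trans sdiff_subset))
    rcases mem_union.mp hJ with hJP | hJQ
    · exact Or.inr (Or.inl ((hPC J hJP).trans inter_subset_left))
    by_cases hJI₁ : J ⊆ I₁
    · exact Or.inr (Or.inl hJI₁)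
    refine Or.inr (Or.inr (not_nonempty_iff_eq_empty.mp fun hmeet => hne ?_))
    have hJsub := hQD J hJQ
    exact .of_inter_left hB hI₁ hI₂ (hQ.subset hJQ) hmeet (hJsub.trans (sdiff_subset.trans
      sdiff_subset)) hJI₁ hi₁ hi₂ fun h => by simpa using hJsub h
  have hPQB : P ∪ Q ⊆ B := hPQ.trans sdiff_subset
  by_cases hI₁F : I₁ ∈ F
  · exact hne (.of_family_mem hB hI₁ hI₂ hi₁ hi₂ hPQB
      (subset_sdiff_of_mem_union hi₁ hi₂ hPC hQD) hF hI₁F hcard hdisj hU)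
  · exact hne (.of_family hB hI₁ hI₂ hi₁ hi₂ hP hPC hQ hQD
      ((subset_insert_iff_of_notMem hI₁F).mp hF) hcard hdisj hU)

end Candidate

theorem stmt_3_general (S : Finset ℕ) (B : Finset (Finset ℕ))
    (hB : IsBuilding S B) (hconn : Bmax B = {S})
    (I₁ I₂ : Finset ℕ) (hI₁ : I₁ ∈ B) (hI₂ : I₂ ∈ B)
    (h12 : ¬I₁ ⊆ I₂) (h21 : ¬I₂ ⊆ I₁)
    (i₁ : ℕ) (hi₁ : i₁ ∈ I₁ \ I₂) (i₂ : ℕ) (hi₂ : i₂ ∈ I₂ \ I₁)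
    (N N' : Finset (Finset ℕ))
    (hN : MaxNested (restrict B (I₁ ∩ I₂)) N)
    (hN' : MaxNested (restrict B (((I₁ ∪ I₂) \ (I₁ ∩ I₂)) \ {i₁, i₂})) N')
    (hnot : ¬IsNested B (insert I₁ (N ∪ Bmax (restrict B (I₁ ∩ I₂)) ∪ N' ∪
        Bmax (restrict B (((I₁ ∪ I₂) \ (I₁ ∩ I₂)) \ {i₁, i₂})))) ∨
      ¬IsNested B (insert I₂ (N ∪ Bmax (restrict B (I₁ ∩ I₂)) ∪ N' ∪
        Bmax (restrict B (((I₁ ∪ I₂) \ (I₁ ∩ I₂)) \ {i₁, i₂}))))) :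
    ∃ I'₁ ∈ B, ∃ I'₂ ∈ B, I₁ ⊆ I'₁ ∧ I₂ ⊆ I'₂ ∧
      i₁ ∈ I'₁ \ I'₂ ∧ i₂ ∈ I'₂ \ I'₁ ∧
      I₁ ∩ I₂ ⊂ I'₁ ∩ I'₂ ∧ I'₁ ∪ I'₂ = I₁ ∪ I₂ := by
  have hi₁S : i₁ ∈ S := (hB.1 I₁ hI₁).1 (mem_sdiff.mp hi₁).1
  have hP := isNested_union_Bmax_restrict hB hconn
    (fun h => (mem_sdiff.mp hi₁).2 (inter_subset_right (h hi₁S))) hN.1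
  have hQ := isNested_union_Bmax_restrict hB hconn (fun h => by simpa using h hi₁S) hN'.1
  have hPC := subset_of_mem_union_Bmax_restrict hN.1
  have hQD := subset_of_mem_union_Bmax_restrict hN'.1
  rw [union_assoc] at hnot
  rcases hnot with hnot | hnot
  · exact HasSeparatedEnlargement.of_not_isNested_insert hB hconn hI₁ hI₂ h21 hi₁ hi₂ hP hPC hQ hQD hnot
  · refine (HasSeparatedEnlargement.of_not_isNested_insert hB hconn hI₂ hI₁ h12 hi₂ hi₁
      hP (inter_comm I₁ I₂ ▸ hPC) hQ (fun K hK => ?_) hnot).symm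
    rw [union_comm I₂, inter_comm I₂, pair_comm]
    exact hQD K hK

/-- Lemma: if the candidate nested set built from `I_k`, maximal nested sets of
`B|_{I₁ ∩ I₂}` and `B|_{(I₁ △ I₂) \ {i₁, i₂}}` and their components fails to be nested,
then `I₁, I₂` can be enlarged keeping `i₁, i₂` separated, with strictly larger
intersection and the same union. -/
theorem stmt_3 (S : Finset ℕ) (hS : S.Nonempty) (B : Finset (Finset ℕ))
    (hB : IsBuilding S B) (hconn : Bmax B = {S})
    (I₁ I₂ : Finset ℕ) (hI₁ : I₁ ∈ B) (hI₂ : I₂ ∈ B)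
    (hint : (I₁ ∩ I₂).Nonempty) (h12 : ¬I₁ ⊆ I₂) (h21 : ¬I₂ ⊆ I₁)
    (hdiff : 3 ≤ ((I₁ ∪ I₂) \ (I₁ ∩ I₂)).card)
    (i₁ : ℕ) (hi₁ : i₁ ∈ I₁ \ I₂) (i₂ : ℕ) (hi₂ : i₂ ∈ I₂ \ I₁)
    (N N' : Finset (Finset ℕ))
    (hN : MaxNested (restrict B (I₁ ∩ I₂)) N)
    (hN' : MaxNested (restrict B (((I₁ ∪ I₂) \ (I₁ ∩ I₂)) \ {i₁, i₂})) N')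
    (hnot : ¬IsNested B (insert I₁ (N ∪ Bmax (restrict B (I₁ ∩ I₂)) ∪ N' ∪
        Bmax (restrict B (((I₁ ∪ I₂) \ (I₁ ∩ I₂)) \ {i₁, i₂})))) ∨
      ¬IsNested B (insert I₂ (N ∪ Bmax (restrict B (I₁ ∩ I₂)) ∪ N' ∪
        Bmax (restrict B (((I₁ ∪ I₂) \ (I₁ ∩ I₂)) \ {i₁, i₂}))))) :
    ∃ I'₁ ∈ B, ∃ I'₂ ∈ B, I₁ ⊆ I'₁ ∧ I₂ ⊆ I'₂ ∧
      i₁ ∈ I'₁ \ I'₂ ∧ i₂ ∈ I'₂ \ I'₁ ∧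
      I₁ ∩ I₂ ⊂ I'₁ ∩ I'₂ ∧ I'₁ ∪ I'₂ = I₁ ∪ I₂ :=
  stmt_3_general S B hB hconn I₁ I₂ hI₁ hI₂ h12 h21 i₁ hi₁ i₂ hi₂ N N' hN hN' hnot
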